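/- arXiv:math/0202154 — 3 statements merged into one kernel-verified Lean document; each statement's English description precedes it below -/
import Mathlib

section
/- For complex numbers x, y with |x| < 1 and |y| < 1, the product of the series Li_1(x) = Σ_{k≥1} x^k/k and Li_1(y) = Σ_{k≥1} y^k/k equals Li_{1,1}(x,y) + Li_{1,1}(y,x) + Li_2(xy), where Li_{1,1}(x,y) = Σ_{0<k<l} x^k y^l/(k·l) and Li_2(z) = Σ_{k≥1} z^k/k². -/
/-!
Both series converge absolutely, so `Li₁(x) Li₁(y)` is the sum of `x^k y^l / (k l)` over all
pairs `(k, l)`. Splitting the pairs into `k < l`, `k > l` and `k = l` gives `Li_{1,1}(x, y)`,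
`Li_{1,1}(y, x)` and `Li₂(xy)`.
-/

open scoped BigOperators

/-- The single logarithm `Li₁(x) = ∑_{k ≥ 1} x^k / k`. -/
noncomputable def Li1 (x : ℂ) : ℂ := ∑' k : ℕ, x ^ (k + 1) / (k + 1 : ℂ)

/-- The dilogarithm `Li₂(z) = ∑_{k ≥ 1} z^k / k²`. -/
noncomputable def Li2 (z : ℂ) : ℂ := ∑' k : ℕ, z ^ (k + 1) / ((k + 1 : ℂ) ^ 2)

/-- The double logarithm `Li_{1,1}(x,y) = ∑_{0 < k < l} x^k y^l / (k l)`,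
parametrized by `k = p.1 + 1` and `l = p.1 + p.2 + 2`. -/
noncomputable def Li11 (x y : ℂ) : ℂ :=
  ∑' p : ℕ × ℕ,
    x ^ (p.1 + 1) * y ^ (p.1 + p.2 + 2) / ((p.1 + 1 : ℂ) * (p.1 + p.2 + 2 : ℂ))

def Nat.ltGtDiagEquiv : (ℕ × ℕ ⊕ ℕ × ℕ) ⊕ ℕ ≃ ℕ × ℕ where
  toFun := Sum.elim (Sum.elim (fun q => (q.1, q.1 + q.2 + 1)) (fun q => (q.1 + q.2 + 1, q.1)))
    fun n => (n, n)
  invFun p :=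
    if p.1 < p.2 then .inl (.inl (p.1, p.2 - p.1 - 1))
    else if p.2 < p.1 then .inl (.inr (p.2, p.1 - p.2 - 1))
    else .inr p.1
  left_inv := by
    rintro ((⟨i, d⟩ | ⟨j, d⟩) | n) <;> simp [add_assoc]
  right_inv := by
    rintro ⟨i, j⟩
    dsimp only
    split_ifs <;> ext <;> dsimp only [Sum.elim_inl, Sum.elim_inr] <;> omega

theorem HasSum.of_lt_gt_diag {M : Type*} [AddCommMonoid M] [TopologicalSpace M]
    [ContinuousAdd M] {f : ℕ × ℕ → M} {a b c : M}
    (ha : HasSum (fun q : ℕ × ℕ => f (q.1, q.1 + q.2 + 1)) a)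
    (hb : HasSum (fun q : ℕ × ℕ => f (q.1 + q.2 + 1, q.1)) b)
    (hc : HasSum (fun n => f (n, n)) c) :
    HasSum f (a + b + c) :=
  Nat.ltGtDiagEquiv.hasSum_iff.1 ((ha.sum hb).sum hc)

theorem Summable.tsum_eq_tsum_lt_add_tsum_gt_add_tsum_diag {G : Type*} [AddCommGroup G]
    [UniformSpace G] [IsUniformAddGroup G] [CompleteSpace G] [T2Space G] {f : ℕ × ℕ → G}
    (hf : Summable f) :
    ∑' p, f p =
      ∑' q : ℕ × ℕ, f (q.1, q.1 + q.2 + 1) + ∑' q : ℕ × ℕ, f (q.1 + q.2 + 1, q.1)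
        + ∑' n, f (n, n) := by
  have he := Nat.ltGtDiagEquiv.injective
  have hlt := hf.comp_injective (he.comp (Sum.inl_injective.comp Sum.inl_injective))
  have hgt := hf.comp_injective (he.comp (Sum.inl_injective.comp Sum.inr_injective))
  have hdiag := hf.comp_injective (he.comp Sum.inr_injective)
  exact (hlt.hasSum.of_lt_gt_diag hgt.hasSum hdiag.hasSum).tsum_eq

lemma Complex.summable_norm_pow_succ_div {x : ℂ} (hx : ‖x‖ < 1) :
    Summable fun k : ℕ => ‖x ^ (k + 1) / (k + 1 : ℂ)‖ :=
  (Real.hasSum_pow_div_log_of_abs_lt_one (x := ‖x‖) (by rwa [abs_norm])).summable.congr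
    fun k => by
      rw [norm_div, norm_pow, ← Nat.cast_add_one (R := ℂ), Complex.norm_natCast,
        Nat.cast_add_one]

theorem stmt0 (x y : ℂ) (hx : ‖x‖ < 1) (hy : ‖y‖ < 1) :
    Li1 x * Li1 y = Li11 x y + Li11 y x + Li2 (x * y) := by
  have hsx := Complex.summable_norm_pow_succ_div hx
  have hsy := Complex.summable_norm_pow_succ_div hy
  rw [Li1, Li1, tsum_mul_tsum_of_summable_norm hsx hsy,
    (summable_mul_of_summable_norm hsx hsy).tsum_eq_tsum_lt_add_tsum_gt_add_tsum_diag]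
  refine congrArg₂ _ (congrArg₂ _ (tsum_congr fun q => ?_) (tsum_congr fun q => ?_))
    (tsum_congr fun n => ?_) <;> field_simp <;> push_cast <;> ring
end

section
/- Let ω_1, ..., ω_{p+q} be continuous 1-forms (complex-valued functions) along a smooth path γ: [0,1] → ℂ. Then the product of iterated integrals satisfies the shuffle product formula: (∫_γ ω_1∘...∘ω_p) · (∫_γ ω_{p+1}∘...∘ω_{p+q}) = Σ_{σ ∈ Σ_{p,q}} ∫_γ ω_{σ(1)}∘...∘ω_{σ(p+q)}, where Σ_{p,q} is the set of (p,q)-shuffles. -/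
open MeasureTheory
open scoped BigOperators Classical

/-- The standard ordered simplex `{0 ≤ t₁ ≤ ... ≤ t_n ≤ 1}` in `ℝ^n`. -/
def orderedSimplex (n : ℕ) : Set (Fin n → ℝ) :=
  {t | (∀ i, t i ∈ Set.Icc (0 : ℝ) 1) ∧ ∀ i j : Fin n, i ≤ j → t i ≤ t j}

/-- The iterated integral `∫_γ ω₁ ∘ ... ∘ ω_n = ∫_{0≤t₁≤...≤t_n≤1} f₁(t₁)⋯f_n(t_n) dt`,
where `f i (t) dt = γ* ω_i`. -/
noncomputable def iterIntegral {n : ℕ} (f : Fin n → ℝ → ℂ) : ℂ :=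
  ∫ t in orderedSimplex n, ∏ i, f i (t i)

/-- `σ` is a `(p,q)`-shuffle: `σ⁻¹` is increasing on `{1,...,p}` and on `{p+1,...,p+q}`. -/
def IsPQShuffle (p q : ℕ) (σ : Equiv.Perm (Fin (p + q))) : Prop :=
  ∀ i j : Fin (p + q), i < j →
    (((i : ℕ) < p ∧ (j : ℕ) < p) ∨ (p ≤ (i : ℕ) ∧ p ≤ (j : ℕ))) →
      σ.symm i < σ.symm j

/-!
Through `Fin.append`, `Δ_p × Δ_q` is the set of `t ∈ [0,1]^(p+q)` that increase on each of the
two blocks of coordinates. The permutation that stably sorts such a `t` is a `(p,q)`-shuffle `σ`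
with `t ∘ σ ∈ Δ_(p+q)`, so this set is the union over shuffles of the permuted simplices
`{t | t ∘ σ ∈ Δ_(p+q)}`, which overlap only where `t` is not injective, a null set. Fubini turns
the product of the two iterated integrals into the integral over the union, and on each piece
the change of variables `t ↦ t ∘ σ` gives the iterated integral of `f ∘ σ`.
-/

namespace Tuple

theorem sort_symm_lt_of_lt_of_le {n : ℕ} {α : Type*} [LinearOrder α] {f : Fin n → α}
    {i j : Fin n} (hij : i < j) (hf : f i ≤ f j) : (sort f).symm i < (sort f).symm j := by
  by_contra! h
  have hlt : (sort f).symm j < (sort f).symm i :=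
    h.lt_of_ne fun h' => hij.ne ((sort f).symm.injective h').symm
  have hji : f j ≤ f i := by simpa using monotone_sort f hlt.le
  have hstable := (eq_sort_iff (σ := sort f)).mp rfl |>.2 _ _ hlt
    (by simpa using le_antisymm hji hf)
  simp only [Equiv.apply_symm_apply] at hstable
  exact hstable.not_gt hij

end Tuple

open Function in
theorem MeasureTheory.integral_biUnion_finset₀ {X E ι : Type*} [MeasurableSpace X]
    [NormedAddCommGroup E] [NormedSpace ℝ E] {μ : Measure X} {f : X → E} (t : Finset ι)
    {s : ι → Set X} (hs : ∀ i ∈ t, NullMeasurableSet (s i) μ)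
    (h's : Set.Pairwise ↑t (AEDisjoint μ on s)) (hf : ∀ i ∈ t, IntegrableOn f (s i) μ) :
    ∫ x in ⋃ i ∈ t, s i, f x ∂μ = ∑ i ∈ t, ∫ x in s i, f x ∂μ := by
  classical
  induction t using Finset.induction_on with
  | empty => simp
  | insert a t hat ih =>
    simp only [Finset.coe_insert, Finset.forall_mem_insert, Set.pairwise_insert,
      Finset.set_biUnion_insert] at hs hf h's ⊢
    rw [setIntegral_union₀ _ (t.nullMeasurableSet_biUnion hs.2) hf.1
      (integrableOn_finset_iUnion.2 hf.2), Finset.sum_insert hat, ih hs.2 h's.1 hf.2]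
    rw [AEDisjoint, Set.inter_iUnion₂]
    exact (measure_biUnion_null_iff t.countable_toSet).2 fun i hi =>
      (h's.2 i hi (ne_of_mem_of_not_mem hi hat).symm).1

theorem volume_setOf_apply_eq_apply {ι : Type*} [Fintype ι] {i j : ι} (hij : i ≠ j) :
    volume {t : ι → ℝ | t i = t j} = 0 := by
  let L : (ι → ℝ) →ₗ[ℝ] ℝ := (LinearMap.proj i : (ι → ℝ) →ₗ[ℝ] ℝ) - LinearMap.proj j
  have hL : {t : ι → ℝ | t i = t j} = LinearMap.ker L := by
    ext t; simp [L, sub_eq_zero]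
  rw [hL]
  refine Measure.addHaar_submodule _ _ fun htop => ?_
  have h := (Submodule.eq_top_iff'.mp htop) (Pi.single i 1)
  simp [L, Pi.single_eq_of_ne hij.symm] at h

theorem volume_setOf_not_injective {ι : Type*} [Fintype ι] :
    volume {t : ι → ℝ | ¬ Function.Injective t} = 0 := by
  have h : {t : ι → ℝ | ¬ Function.Injective t} ⊆ ⋃ (i) (j) (_ : i ≠ j), {t | t i = t j} := by
    intro t ht
    simp only [Function.Injective, not_forall] at ht
    obtain ⟨i, j, hij, hne⟩ := ht
    simp only [Set.mem_iUnion]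
    exact ⟨i, j, hne, hij⟩
  exact measure_mono_null h (measure_iUnion_null fun i => measure_iUnion_null fun j =>
    measure_iUnion_null fun hij => volume_setOf_apply_eq_apply hij)

theorem measurePreserving_finAppend (p q : ℕ) :
    MeasurePreserving (fun z : (Fin p → ℝ) × (Fin q → ℝ) => Fin.append z.1 z.2) := by
  have h_eq : (fun z : (Fin p → ℝ) × (Fin q → ℝ) => Fin.append z.1 z.2) =
      MeasurableEquiv.piCongrLeft (fun _ => ℝ) finSumFinEquiv ∘
        (MeasurableEquiv.sumPiEquivProdPi fun _ : Fin p ⊕ Fin q => ℝ).symm := by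
    funext z i
    refine Fin.addCases (fun i => ?_) (fun j => ?_) i
    all_goals simp only [Fin.append_left, Fin.append_right, Function.comp_apply,
      MeasurableEquiv.coe_piCongrLeft, MeasurableEquiv.coe_sumPiEquivProdPi_symm]
    · rw [← finSumFinEquiv_apply_left, Equiv.piCongrLeft_sumInl]
    · rw [← finSumFinEquiv_apply_right, Equiv.piCongrLeft_sumInr]
  rw [h_eq]
  exact (volume_measurePreserving_piCongrLeft _ _).comp
    (volume_measurePreserving_sumPiEquivProdPi_symm _)

section PermutedSimplex

variable {n : ℕ}

theorem measurableSet_orderedSimplex : MeasurableSet (orderedSimplex n) := by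
  simp only [orderedSimplex, Set.ofPred_and, Set.ofPred_forall]
  exact (MeasurableSet.iInter fun i => measurableSet_Icc.preimage (measurable_pi_apply i)).inter
    (MeasurableSet.iInter fun i => MeasurableSet.iInter fun j => MeasurableSet.iInter fun _ =>
      measurableSet_le (measurable_pi_apply i) (measurable_pi_apply j))

def permutedSimplex (σ : Equiv.Perm (Fin n)) : Set (Fin n → ℝ) :=
  {t | t ∘ σ ∈ orderedSimplex n}

theorem setIntegral_permutedSimplex_comp {E : Type*} [NormedAddCommGroup E] [NormedSpace ℝ E]
    (σ : Equiv.Perm (Fin n)) (g : (Fin n → ℝ) → E) :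
    ∫ t in permutedSimplex σ, g (t ∘ σ) = ∫ t in orderedSimplex n, g t := by
  let e := MeasurableEquiv.piCongrLeft (fun _ : Fin n => ℝ) σ.symm
  have he : ⇑e = fun t => t ∘ σ := by
    funext t i
    simpa [e, MeasurableEquiv.coe_piCongrLeft] using
      Equiv.piCongrLeft_apply_apply (P := fun _ : Fin n => ℝ) σ.symm t (σ i)
  have h := (volume_measurePreserving_piCongrLeft (fun _ : Fin n => ℝ) σ.symm)
    |>.setIntegral_preimage_emb e.measurableEmbedding g (orderedSimplex n)
  rwa [he] at h

theorem setIntegral_permutedSimplex_prod (σ : Equiv.Perm (Fin n)) (f : Fin n → ℝ → ℂ) :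
    ∫ t in permutedSimplex σ, ∏ i, f i (t i) = iterIntegral (fun i => f (σ i)) := by
  rw [iterIntegral, ← setIntegral_permutedSimplex_comp σ]
  congr with t
  exact (Equiv.prod_comp σ fun i => f i (t i)).symm

theorem measurableSet_permutedSimplex (σ : Equiv.Perm (Fin n)) :
    MeasurableSet (permutedSimplex σ) :=
  measurableSet_orderedSimplex.preimage (by fun_prop)

theorem permutedSimplex_subset_Icc (σ : Equiv.Perm (Fin n)) :
    permutedSimplex σ ⊆ Set.Icc 0 1 := fun t ht =>
  ⟨fun i => by simpa using (ht.1 (σ.symm i)).1, fun i => by simpa using (ht.1 (σ.symm i)).2⟩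

theorem eq_of_mem_permutedSimplex {σ τ : Equiv.Perm (Fin n)} {t : Fin n → ℝ}
    (hσ : t ∈ permutedSimplex σ) (hτ : t ∈ permutedSimplex τ) (ht : Function.Injective t) :
    σ = τ :=
  Equiv.ext fun i => ht (congrFun (Tuple.unique_monotone (fun _ _ h => hσ.2 _ _ h)
    (fun _ _ h => hτ.2 _ _ h)) i)

theorem aedisjoint_permutedSimplex {σ τ : Equiv.Perm (Fin n)} (h : σ ≠ τ) :
    AEDisjoint volume (permutedSimplex σ) (permutedSimplex τ) :=
  measure_mono_null (fun _ ht hinj => h (eq_of_mem_permutedSimplex ht.1 ht.2 hinj))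
    volume_setOf_not_injective

end PermutedSimplex

section ShuffleDecomposition

variable {p q : ℕ}

def orderedSimplexProd (p q : ℕ) : Set (Fin (p + q) → ℝ) :=
  {t | (fun i => t (Fin.castAdd q i)) ∈ orderedSimplex p ∧
    (fun j => t (Fin.natAdd p j)) ∈ orderedSimplex q}

theorem iterIntegral_mul_iterIntegral (f : Fin (p + q) → ℝ → ℂ) :
    iterIntegral (fun i : Fin p => f (Fin.castAdd q i)) *
      iterIntegral (fun j : Fin q => f (Fin.natAdd p j)) =
    ∫ t in orderedSimplexProd p q, ∏ i, f i (t i) := by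
  have hpre : (fun z : (Fin p → ℝ) × (Fin q → ℝ) => Fin.append z.1 z.2) ⁻¹'
      orderedSimplexProd p q = orderedSimplex p ×ˢ orderedSimplex q := by
    ext z
    simp [orderedSimplexProd]
  rw [← (measurePreserving_finAppend p q).setIntegral_preimage_emb
    (Fin.appendHomeomorph p q).toMeasurableEquiv.measurableEmbedding, hpre, iterIntegral,
    iterIntegral, ← setIntegral_prod_mul, Measure.volume_eq_prod]
  simp [Fin.prod_univ_add]

theorem mem_Icc_of_mem_orderedSimplexProd {t : Fin (p + q) → ℝ}
    (ht : t ∈ orderedSimplexProd p q) (k : Fin (p + q)) : t k ∈ Set.Icc 0 1 := by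
  induction k using Fin.addCases with
  | left i => exact ht.1.1 i
  | right j => exact ht.2.1 j

theorem le_of_mem_orderedSimplexProd {t : Fin (p + q) → ℝ} (ht : t ∈ orderedSimplexProd p q)
    {k l : Fin (p + q)} (hkl : k ≤ l)
    (hblock : ((k : ℕ) < p ∧ (l : ℕ) < p) ∨ (p ≤ (k : ℕ) ∧ p ≤ (l : ℕ))) : t k ≤ t l := by
  induction k using Fin.addCases with
  | left i =>
    induction l using Fin.addCases with
    | left i' => exact ht.1.2 i i' ((Fin.strictMono_castAdd q).le_iff_le.1 hkl)
    | right j' => simp at hblock; omega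
  | right j =>
    induction l using Fin.addCases with
    | left i' => simp at hblock; omega
    | right j' => exact ht.2.2 j j' (by simpa using hkl)

theorem isPQShuffle_sort {t : Fin (p + q) → ℝ} (ht : t ∈ orderedSimplexProd p q) :
    IsPQShuffle p q (Tuple.sort t) := fun _ _ hkl hblock =>
  Tuple.sort_symm_lt_of_lt_of_le hkl (le_of_mem_orderedSimplexProd ht hkl.le hblock)

theorem mem_permutedSimplex_sort {t : Fin (p + q) → ℝ} (ht : t ∈ orderedSimplexProd p q) :
    t ∈ permutedSimplex (Tuple.sort t) :=
  ⟨fun _ => mem_Icc_of_mem_orderedSimplexProd ht _, fun _ _ h => Tuple.monotone_sort t h⟩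

theorem permutedSimplex_subset_orderedSimplexProd {σ : Equiv.Perm (Fin (p + q))}
    (hσ : IsPQShuffle p q σ) : permutedSimplex σ ⊆ orderedSimplexProd p q := by
  intro t ht
  have hle : ∀ k l : Fin (p + q), k ≤ l →
      ((k : ℕ) < p ∧ (l : ℕ) < p) ∨ (p ≤ (k : ℕ) ∧ p ≤ (l : ℕ)) → t k ≤ t l := by
    intro k l hkl hblock
    rcases hkl.lt_or_eq with hlt | rfl
    · simpa using ht.2 _ _ (hσ k l hlt hblock).le
    · rfl
  have hIcc := permutedSimplex_subset_Icc σ ht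
  exact ⟨⟨fun _ => ⟨hIcc.1 _, hIcc.2 _⟩,
      fun _ _ h => hle _ _ ((Fin.strictMono_castAdd q).monotone h) (by simp)⟩,
    ⟨fun _ => ⟨hIcc.1 _, hIcc.2 _⟩, fun _ _ h => hle _ _ (by simpa using h) (by simp)⟩⟩

theorem orderedSimplexProd_eq_biUnion :
    orderedSimplexProd p q =
      ⋃ σ ∈ Finset.univ.filter (fun σ => IsPQShuffle p q σ), permutedSimplex σ := by
  refine subset_antisymm (fun t ht => ?_) (Set.iUnion₂_subset fun σ hσ =>
    permutedSimplex_subset_orderedSimplexProd (Finset.mem_filter.1 hσ).2)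
  exact Set.mem_biUnion (Finset.mem_filter.2 ⟨Finset.mem_univ _, isPQShuffle_sort ht⟩)
    (mem_permutedSimplex_sort ht)

theorem setIntegral_orderedSimplexProd {E : Type*} [NormedAddCommGroup E] [NormedSpace ℝ E]
    {g : (Fin (p + q) → ℝ) → E} (hg : IntegrableOn g (Set.Icc 0 1)) :
    ∫ t in orderedSimplexProd p q, g t =
      ∑ σ ∈ Finset.univ.filter (fun σ => IsPQShuffle p q σ), ∫ t in permutedSimplex σ, g t := by
  rw [orderedSimplexProd_eq_biUnion]
  exact integral_biUnion_finset₀ _ (fun σ _ => (measurableSet_permutedSimplex σ).nullMeasurableSet)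
    (fun _ _ _ _ h => aedisjoint_permutedSimplex h)
    (fun σ _ => hg.mono_set (permutedSimplex_subset_Icc σ))

end ShuffleDecomposition

/-- The shuffle product formula for iterated integrals: the product of the iterated
integrals of `ω₁,...,ω_p` and of `ω_{p+1},...,ω_{p+q}` along a path is the sum over
all `(p,q)`-shuffles `σ` of the iterated integral of `ω_{σ(1)},...,ω_{σ(p+q)}`. -/
theorem stmt4 (p q : ℕ) (f : Fin (p + q) → ℝ → ℂ)
    (hf : ∀ i, ContinuousOn (f i) (Set.Icc (0 : ℝ) 1)) :
    iterIntegral (fun i : Fin p => f (Fin.castAdd q i)) *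
      iterIntegral (fun j : Fin q => f (Fin.natAdd p j)) =
    ∑ σ ∈ Finset.univ.filter (fun σ : Equiv.Perm (Fin (p + q)) => IsPQShuffle p q σ),
      iterIntegral (fun i => f (σ i)) := by
  have hint : IntegrableOn (fun t : Fin (p + q) → ℝ => ∏ i, f i (t i)) (Set.Icc 0 1) :=
    ContinuousOn.integrableOn_compact isCompact_Icc <| continuousOn_finsetProd _ fun i _ =>
      (hf i).comp (continuous_apply i).continuousOn fun _ ht => ⟨ht.1 i, ht.2 i⟩
  rw [iterIntegral_mul_iterIntegral, setIntegral_orderedSimplexProd hint]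
  exact Finset.sum_congr rfl fun σ _ => setIntegral_permutedSimplex_prod σ f
end

section
/- Kronecker's formula: for real φ with 0 < φ < 1 and complex t not an integer, the symmetrized series Σ_{k∈ℤ} e^{2πi φ k}/(k − t) (summed symmetrically as lim_{N→∞} Σ_{|k|≤N}) equals −2πi · e^{2πi φ t}/(e^{2πi t} − 1). -/
/-!
Up to the factor `-2πi / (e^{2πit} - 1)`, the `k`-th term is `ĝ(k) e^{2πikφ}`, where `ĝ(k)` is the
`k`-th Fourier coefficient of `g x = e^{2πitx}` on `[0, 1]`; so the symmetric partial sums are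
those of the Fourier series of `g` at the interior point `φ`. Since `g` is differentiable at `φ`,
`g x - g φ = H x (e^{2πi(φ-x)} - 1)` with `H` continuous on `[0, 1]`, which gives
`ĝ(k) - g(φ) δ_{k0} = e^{2πiφ} Ĥ(k+1) - Ĥ(k)`. Hence the partial sums telescope to
`g φ + e^{2πi(N+1)φ} Ĥ(N+1) - e^{-2πiNφ} Ĥ(-N)`, and both coefficients of `H` tend to `0`
by the Riemann–Lebesgue lemma.
-/

open Filter Complex Set MeasureTheory
open scoped Real FourierTransform

theorem exp_two_pi_I_mul_ne_one {z : ℂ} (hz : ∀ n : ℤ, z ≠ n) : exp (2 * π * I * z) ≠ 1 := by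
  rw [Ne, exp_eq_one_iff]
  rintro ⟨n, hn⟩
  exact hz n (mul_left_cancel₀ two_pi_I_ne_zero (by rw [hn]; ring))

theorem Finset.sum_Icc_neg_sub {M : Type*} [AddCommGroup M] (a : ℤ → M) (N : ℕ) :
    ∑ k ∈ Finset.Icc (-(N : ℤ)) N, (a (k + 1) - a k) = a (N + 1) - a (-N) := by
  induction N with
  | zero => simp
  | succ N ih =>
    have hsplit : Finset.Icc (-((N + 1 : ℕ) : ℤ)) (N + 1 : ℕ) =
        insert (-((N : ℤ) + 1)) (insert ((N : ℤ) + 1) (Finset.Icc (-(N : ℤ)) N)) := by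
      ext k; simp only [Finset.mem_insert, Finset.mem_Icc]; omega
    rw [hsplit, Finset.sum_insert (by simp only [Finset.mem_insert, Finset.mem_Icc]; omega),
      Finset.sum_insert (by simp only [Finset.mem_Icc]; omega), ih]
    push_cast
    abel_nf

theorem fourierCoeffOn_zero_lt_one (f : ℝ → ℂ) (n : ℤ) :
    fourierCoeffOn zero_lt_one f n = ∫ x in (0 : ℝ)..1, exp (-(2 * π * I * n * x)) * f x := by
  rw [fourierCoeffOn_eq_integral]
  simp only [fourier_coe_apply]
  simp

theorem tendsto_fourierCoeffOn_cofinite {E : Type*} [NormedAddCommGroup E] [NormedSpace ℂ E]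
    [CompleteSpace E] {a b : ℝ} (hab : a < b) (f : ℝ → E) :
    Tendsto (fourierCoeffOn hab f) cofinite (nhds 0) := by
  have hba : b - a ≠ 0 := (sub_pos.mpr hab).ne'
  have hcoeff : ∀ n : ℤ, fourierCoeffOn hab f n = (1 / (b - a)) •
      ∫ v, 𝐞 (-(v * (n / (b - a)))) • (Ioc a b).indicator f v := by
    intro n
    rw [fourierCoeffOn_eq_integral, intervalIntegral.integral_of_le hab.le,
      ← integral_indicator measurableSet_Ioc]
    congr 1
    refine integral_congr_ae (Eventually.of_forall fun v => ?_)
    by_cases hv : v ∈ Ioc a b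
    · simp only [indicator_of_mem hv, fourier_coe_apply, Real.fourierChar_apply, Circle.smul_def]
      congr 2
      push_cast
      ring
    · simp [indicator_of_notMem hv]
  have hw : Tendsto (fun n : ℤ => (n : ℝ) / (b - a)) cofinite (cocompact ℝ) :=
    (tendsto_cocompact_mul_right₀ (inv_ne_zero hba)).comp Int.tendsto_coe_cofinite
  rw [funext hcoeff, ← smul_zero (1 / (b - a))]
  exact
    ((Real.tendsto_integral_exp_smul_cocompact ((Ioc a b).indicator f)).comp hw).const_smul
      (1 / (b - a))

theorem fourierCoeffOn_exp_mul {t : ℂ} {n : ℤ} (htn : t ≠ n) :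
    fourierCoeffOn zero_lt_one (fun x : ℝ => exp (2 * π * I * t * x)) n =
      (exp (2 * π * I * t) - 1) / (2 * π * I * (t - n)) := by
  have hc : 2 * π * I * (t - n) ≠ 0 := by simp [Real.pi_ne_zero, sub_ne_zero.mpr htn]
  have hexp : ∀ x : ℝ, exp (-(2 * π * I * n * x)) * exp (2 * π * I * t * x) =
      exp (2 * π * I * (t - n) * x) := fun x => by rw [← exp_add]; ring_nf
  have hperiod : exp (2 * π * I * (t - n)) = exp (2 * π * I * t) := by
    rw [mul_sub, exp_sub, mul_comm _ (n : ℂ), exp_int_mul_two_pi_mul_I, div_one]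
  simp_rw [fourierCoeffOn_zero_lt_one, hexp, integral_exp_mul_complex hc]
  simp [hperiod]

theorem fourierCoeffOn_const (c : ℂ) (n : ℤ) :
    fourierCoeffOn zero_lt_one (fun _ : ℝ => c) n = if n = 0 then c else 0 := by
  split_ifs with hn
  · simp [fourierCoeffOn_zero_lt_one, hn]
  · have h := fourierCoeffOn_exp_mul (t := 0) (n := n) (by exact_mod_cast Ne.symm hn)
    simp only [mul_zero, zero_mul, exp_zero, sub_self, zero_div] at h
    have hc := fourierCoeffOn.const_mul (fun _ : ℝ => (1 : ℂ)) c n zero_lt_one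
    simp only [mul_one] at hc
    rw [hc, h, mul_zero]

theorem fourierCoeffOn_mul_exp_sub_one {H : ℝ → ℂ} (hH : IntervalIntegrable H volume 0 1)
    (φ : ℝ) (n : ℤ) :
    fourierCoeffOn zero_lt_one (fun x => H x * (exp (2 * π * I * (φ - x)) - 1)) n =
      exp (2 * π * I * φ) * fourierCoeffOn zero_lt_one H (n + 1) -
        fourierCoeffOn zero_lt_one H n := by
  have hint : ∀ m : ℤ, IntervalIntegrable (fun x : ℝ => exp (-(2 * π * I * m * x)) * H x)
      volume 0 1 := fun m => hH.continuousOn_mul (by fun_prop)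
  simp only [fourierCoeffOn_zero_lt_one, ← intervalIntegral.integral_const_mul,
    ← intervalIntegral.integral_sub ((hint (n + 1)).const_mul _) (hint n)]
  refine intervalIntegral.integral_congr fun x _ => ?_
  have hshift : exp (-(2 * π * I * n * x)) * exp (2 * π * I * (φ - x)) =
      exp (2 * π * I * φ) * exp (-(2 * π * I * ((n + 1 : ℤ) : ℂ) * x)) := by
    rw [← exp_add, ← exp_add]; push_cast; ring_nf
  linear_combination H x * hshift

theorem fourierCoeffOn_sub_ite_eq_of_sub_eq_mul {f H : ℝ → ℂ} {φ : ℝ}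
    (hf : IntervalIntegrable f volume 0 1) (hH : IntervalIntegrable H volume 0 1)
    (hfH : ∀ x ∈ Icc (0 : ℝ) 1, f x - f φ = H x * (exp (2 * π * I * (φ - x)) - 1)) (n : ℤ) :
    fourierCoeffOn zero_lt_one f n - (if n = 0 then f φ else 0) =
      exp (2 * π * I * φ) * fourierCoeffOn zero_lt_one H (n + 1) -
        fourierCoeffOn zero_lt_one H n := by
  rw [← fourierCoeffOn_const, ← fourierCoeffOn_mul_exp_sub_one hH, fourierCoeffOn_zero_lt_one,
    fourierCoeffOn_zero_lt_one, fourierCoeffOn_zero_lt_one,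
    ← intervalIntegral.integral_sub (hf.continuousOn_mul (by fun_prop))
      (Continuous.intervalIntegrable (by fun_prop) _ _)]
  refine intervalIntegral.integral_congr fun x hx => ?_
  rw [uIcc_of_le zero_le_one] at hx
  rw [← mul_sub, hfH x hx]

theorem exists_continuousOn_sub_eq_mul_exp_sub_one {f : ℝ → ℂ} {φ : ℝ} (hφ : φ ∈ Ioo 0 1)
    (hf : ContinuousOn f (Icc 0 1)) (hfφ : DifferentiableAt ℝ f φ) :
    ∃ H : ℝ → ℂ, ContinuousOn H (Icc 0 1) ∧
      ∀ x ∈ Icc (0 : ℝ) 1, f x - f φ = H x * (exp (2 * π * I * (φ - x)) - 1) := by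
  set r : ℝ → ℂ := fun x => exp (2 * π * I * (φ - x))
  have hr : HasDerivAt r (-(2 * π * I)) φ := by
    have := ((((hasDerivAt_id (φ : ℂ)).const_sub (φ : ℂ)).const_mul (2 * π * I)).cexp).comp_ofReal
    simpa using this
  have hrφ : r φ = 1 := by simp [r]
  have hslope : ∀ x ∈ Icc (0 : ℝ) 1, dslope r φ x ≠ 0 := by
    intro x hx
    rcases eq_or_ne x φ with rfl | hxφ
    · simp [dslope_same, hr.deriv]
    · rw [dslope_of_ne _ hxφ, slope_def_module, hrφ]
      refine smul_ne_zero (inv_ne_zero (sub_ne_zero.mpr hxφ)) (sub_ne_zero.mpr ?_)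
      refine exp_two_pi_I_mul_ne_one fun n hn => hxφ ?_
      have hn' : φ - x = n := by exact_mod_cast hn
      have hn0 : n = 0 := Int.abs_lt_one_iff.mp <| by
        have : |(n : ℝ)| < 1 := abs_lt.mpr ⟨by linarith [hx.2, hφ.1], by linarith [hx.1, hφ.2]⟩
        exact_mod_cast this
      rw [hn0, Int.cast_zero] at hn'
      linarith
  have hnhds : Icc (0 : ℝ) 1 ∈ nhds φ := Icc_mem_nhds hφ.1 hφ.2
  refine ⟨fun x => dslope f φ x / dslope r φ x, ?_, fun x hx => ?_⟩
  · exact ((continuousOn_dslope hnhds).2 ⟨hf, hfφ⟩).div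
      ((continuousOn_dslope hnhds).2 ⟨by fun_prop, hr.differentiableAt⟩) hslope
  · rw [← sub_smul_dslope f φ x, ← hrφ, ← sub_smul_dslope r φ x, real_smul, real_smul]
    field_simp [hslope x hx]

theorem tendsto_sum_fourierCoeffOn_mul_exp {f : ℝ → ℂ} {φ : ℝ} (hφ : φ ∈ Ioo 0 1)
    (hf : ContinuousOn f (Icc 0 1)) (hfφ : DifferentiableAt ℝ f φ) :
    Tendsto (fun N : ℕ => ∑ k ∈ Finset.Icc (-(N : ℤ)) N,
        fourierCoeffOn zero_lt_one f k * exp (2 * π * I * k * φ)) atTop (nhds (f φ)) := by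
  obtain ⟨H, hH, hfH⟩ := exists_continuousOn_sub_eq_mul_exp_sub_one hφ hf hfφ
  set a : ℤ → ℂ := fun k => fourierCoeffOn zero_lt_one H k * exp (2 * π * I * k * φ)
  have hstep : ∀ k : ℤ, fourierCoeffOn zero_lt_one f k * exp (2 * π * I * k * φ) =
      (if k = 0 then f φ else 0) + (a (k + 1) - a k) := by
    intro k
    have hcoeff := fourierCoeffOn_sub_ite_eq_of_sub_eq_mul
      (hf.intervalIntegrable_of_Icc zero_le_one) (hH.intervalIntegrable_of_Icc zero_le_one) hfH k
    have hshift : exp (2 * π * I * φ) * exp (2 * π * I * k * φ) =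
        exp (2 * π * I * ((k + 1 : ℤ) : ℂ) * φ) := by
      rw [← exp_add]; push_cast; ring_nf
    have hδ : (if k = 0 then f φ else 0) * exp (2 * π * I * k * φ) = if k = 0 then f φ else 0 := by
      split_ifs with hk <;> simp [hk]
    linear_combination exp (2 * π * I * k * φ) * hcoeff + hδ +
      fourierCoeffOn zero_lt_one H (k + 1) * hshift
  have hsum : ∀ N : ℕ, ∑ k ∈ Finset.Icc (-(N : ℤ)) N,
      fourierCoeffOn zero_lt_one f k * exp (2 * π * I * k * φ) = f φ + (a (N + 1) - a (-N)) := by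
    intro N
    simp only [hstep, Finset.sum_add_distrib, Finset.sum_Icc_neg_sub, Finset.sum_ite_eq']
    simp
  have ha : Tendsto a cofinite (nhds 0) := by
    rw [tendsto_zero_iff_norm_tendsto_zero]
    simpa [a, norm_exp] using (tendsto_fourierCoeffOn_cofinite zero_lt_one H).norm
  have hN : Tendsto (fun N : ℕ => a (N + 1) - a (-N)) atTop (nhds 0) := by
    have h₁ : Tendsto (fun N : ℕ => (N : ℤ) + 1) atTop cofinite := by
      rw [← Nat.cofinite_eq_atTop]
      exact (add_left_injective 1 |>.comp Nat.cast_injective).tendsto_cofinite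
    have h₂ : Tendsto (fun N : ℕ => -(N : ℤ)) atTop cofinite := by
      rw [← Nat.cofinite_eq_atTop]
      exact (neg_injective.comp Nat.cast_injective).tendsto_cofinite
    simpa using (ha.comp h₁).sub (ha.comp h₂)
  simpa [hsum] using hN.const_add (f φ)

/-- Kronecker's formula: for `0 < φ < 1` and `t ∈ ℂ ∖ ℤ`, the symmetric limit
`lim_{N→∞} ∑_{|k| ≤ N} e^{2πiφk}/(k − t) = −2πi · e^{2πiφt}/(e^{2πit} − 1)`. -/
theorem stmt14 (φ : ℝ) (hφ0 : 0 < φ) (hφ1 : φ < 1) (t : ℂ) (ht : ∀ k : ℤ, t ≠ (k : ℂ)) :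
    Tendsto (fun N : ℕ => ∑ k ∈ Finset.Icc (-(N : ℤ)) (N : ℤ),
        Complex.exp (2 * (Real.pi : ℂ) * Complex.I * (φ : ℂ) * (k : ℂ)) / ((k : ℂ) - t))
      atTop
      (nhds (-(2 * (Real.pi : ℂ) * Complex.I) *
        Complex.exp (2 * (Real.pi : ℂ) * Complex.I * (φ : ℂ) * t) /
          (Complex.exp (2 * (Real.pi : ℂ) * Complex.I * t) - 1))) := by
  set g : ℝ → ℂ := fun x => exp (2 * π * I * t * x)
  set c : ℂ := -(2 * π * I) / (exp (2 * π * I * t) - 1)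
  have hE : exp (2 * π * I * t) - 1 ≠ 0 := sub_ne_zero.mpr (exp_two_pi_I_mul_ne_one ht)
  have hterm : ∀ k : ℤ, exp (2 * π * I * φ * k) / (k - t) =
      c * (fourierCoeffOn zero_lt_one g k * exp (2 * π * I * k * φ)) := by
    intro k
    have hkt : (k : ℂ) - t ≠ 0 := sub_ne_zero.mpr (ht k).symm
    have htk : t - k ≠ 0 := sub_ne_zero.mpr (ht k)
    rw [fourierCoeffOn_exp_mul (ht k)]
    simp only [c]
    field_simp
    ring
  have hlim := (tendsto_sum_fourierCoeffOn_mul_exp (f := g) ⟨hφ0, hφ1⟩ (by fun_prop)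
    (by fun_prop)).const_mul c
  simp only [hterm, ← Finset.mul_sum]
  convert hlim using 2
  simp only [c, g]
  ring_nf
end
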